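/- arXiv:1601.05032 — 7 statements merged into one kernel-verified Lean document; each statement's English description precedes it below -/
import Mathlib

section
/- Define sequences of integer polynomials by Z_0(t) = t·f(t^2+1), X_0(t) = t^4+3t^2+1, Z_n = (t^4+3t^2+1)Z_{n-1} + t·f(t^2+1)·X_{n-1}, X_n = t·Z_{n-1} + (t^4+3t^2+1)X_{n-1}, where f(y) = y(y+1)(y+2). Then for all n ≥ 0 and all integers t, Z_n(t)^2 - f(t^2+1)·X_n(t)^2 = -f(t^2+1). -/
theorem stmt_2 (f : ℤ → ℤ) (hf : ∀ y, f y = y*(y+1)*(y+2))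
    (Z X : ℕ → ℤ → ℤ)
    (hZ0 : ∀ t, Z 0 t = t * f (t^2+1))
    (hX0 : ∀ t, X 0 t = t^4+3*t^2+1)
    (hZ : ∀ n t, Z (n+1) t = (t^4+3*t^2+1) * Z n t + t * f (t^2+1) * X n t)
    (hX : ∀ n t, X (n+1) t = t * Z n t + (t^4+3*t^2+1) * X n t) :
    ∀ n t, (Z n t)^2 - f (t^2+1) * (X n t)^2 = -f (t^2+1) := by
  intro n
  induction n with
  | zero => intro t; rw [hZ0, hX0, hf]; ring
  | succ n ih =>
    intro t
    rw [hZ, hX, hf]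
    have h := ih t
    rw [hf] at h
    linear_combination h
end

section
/- The Diophantine equation x(x+1)·y(y+1)(y+2) = z^2 has infinitely many solutions in the polynomial ring Z[t]; more precisely, there exist infinitely many distinct pairs of polynomials x_n(t), z_n(t) ∈ Z[t] such that x_n(x_n+1)·y(y+1)(y+2) = z_n^2 identically, where y = 4t^2+1. -/
open Polynomial

noncomputable def pA : Polynomial ℤ := 16*X^4+12*X^2+1
noncomputable def pB : Polynomial ℤ := 2*X
noncomputable def pD : Polynomial ℤ := (4*X^2+1)*(4*X^2+2)*(4*X^2+3)

noncomputable def pU : ℕ → Polynomial ℤ × Polynomial ℤ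
  | 0 => (1, 0)
  | n+1 => (pA * (pU n).1 + pD * pB * (pU n).2, pA * (pU n).2 + pB * (pU n).1)

lemma key : pA^2 - pD*pB^2 = 1 := by unfold pA pB pD; ring

lemma pell (n : ℕ) : (pU n).1^2 - pD * (pU n).2^2 = 1 := by
  induction n with
  | zero => simp [pU]
  | succ n ih =>
    show (pA * (pU n).1 + pD * pB * (pU n).2)^2
        - pD * (pA * (pU n).2 + pB * (pU n).1)^2 = 1
    linear_combination (pA^2 - pD*pB^2) * ih + key

lemma parity (n : ℕ) : ∃ p q : Polynomial ℤ, (pU n).1 = 2*p+1 ∧ (pU n).2 = 2*q := by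
  induction n with
  | zero => exact ⟨0, 0, by simp [pU], by simp [pU]⟩
  | succ n ih =>
    obtain ⟨p, q, hp, hq⟩ := ih
    refine ⟨pA*p + pD*pB*q + 8*X^4+6*X^2, pA*q + X*(2*p+1), ?_, ?_⟩
    · show pA * (pU n).1 + pD * pB * (pU n).2 = _
      rw [hp, hq]; unfold pA; ring
    · show pA * (pU n).2 + pB * (pU n).1 = _
      rw [hp, hq]; unfold pB; ring

lemma pos (n : ℕ) : 1 ≤ ((pU n).1).eval 1 ∧ 0 ≤ ((pU n).2).eval 1 := by
  induction n with
  | zero => simp [pU]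
  | succ n ih =>
    have hA : pA.eval 1 = 29 := by simp [pA]
    have hB : pB.eval 1 = 2 := by simp [pB]
    have hD : pD.eval 1 = 210 := by norm_num [pD]
    constructor
    · show (pA * (pU n).1 + pD * pB * (pU n).2).eval 1 ≥ 1
      simp only [eval_add, eval_mul, hA, hB, hD]
      nlinarith [ih.1, ih.2]
    · show 0 ≤ (pA * (pU n).2 + pB * (pU n).1).eval 1
      simp only [eval_add, eval_mul, hA, hB, hD]
      nlinarith [ih.1, ih.2]

lemma umono : StrictMono (fun n => ((pU n).1).eval 1) := by
  apply strictMono_nat_of_lt_succ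
  intro n
  show ((pU n).1).eval 1 < (pA * (pU n).1 + pD * pB * (pU n).2).eval 1
  have hA : pA.eval 1 = 29 := by simp [pA]
  have hB : pB.eval 1 = 2 := by simp [pB]
  have hD : pD.eval 1 = 210 := by norm_num [pD]
  simp only [eval_add, eval_mul, hA, hB, hD]
  nlinarith [(pos n).1, (pos n).2]

open Polynomial in
theorem stmt_4 :
    ∃ x z : ℕ → Polynomial ℤ, Function.Injective x ∧
      ∀ n, let y : Polynomial ℤ := 4*X^2+1
        x n * (x n + 1) * (y * (y+1) * (y+2)) = (z n)^2 := by
  refine ⟨fun n => (parity n).choose, fun n => pD * (parity n).choose_spec.choose, ?_, ?_⟩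
  · intro m n h
    have hm := (parity m).choose_spec.choose_spec.1
    have hn := (parity n).choose_spec.choose_spec.1
    have h' : (parity m).choose = (parity n).choose := h
    have : ((pU m).1).eval 1 = ((pU n).1).eval 1 := by rw [hm, hn, h']
    exact umono.injective this
  · intro n
    obtain ⟨hp, hq⟩ := (parity n).choose_spec.choose_spec
    set p := (parity n).choose
    set q := (parity n).choose_spec.choose
    have hpell := pell n
    rw [hp, hq] at hpell
    intro y
    have h4 : (4 : Polynomial ℤ) * (p * (p + 1) * (y * (y+1) * (y+2)))
        = 4 * ((pD * q)^2) := by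
      simp only [y]
      unfold pD at hpell ⊢
      linear_combination ((4*X^2+1)*(4*X^2+2)*(4*X^2+3)) * hpell
    have h40 : (4 : Polynomial ℤ) ≠ 0 := by norm_num
    exact mul_left_cancel₀ h40 h4
end

section
/- Define integer polynomial sequences by Z_0(t) = f(t), X_0(t) = t^2+3t+1, Z_n = (t^2+3t+1)Z_{n-1} + f(t)X_{n-1}, X_n = Z_{n-1} + (t^2+3t+1)X_{n-1}, where f(t) = t(t+1)(t+2)(t+3). Then for all n ≥ 0 and all integers t, Z_n(t)^2 - f(t)X_n(t)^2 = -f(t). -/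
theorem stmt_5 (f : ℤ → ℤ) (hf : ∀ t, f t = t*(t+1)*(t+2)*(t+3))
    (Z X : ℕ → ℤ → ℤ)
    (hZ0 : ∀ t, Z 0 t = f t)
    (hX0 : ∀ t, X 0 t = t^2+3*t+1)
    (hZ : ∀ n t, Z (n+1) t = (t^2+3*t+1) * Z n t + f t * X n t)
    (hX : ∀ n t, X (n+1) t = Z n t + (t^2+3*t+1) * X n t) :
    ∀ n t, (Z n t)^2 - f t * (X n t)^2 = -f t := by
  intro n
  induction n with
  | zero => intro t; rw [hZ0, hX0, hf]; ring
  | succ n ih =>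
    intro t
    have h := ih t
    rw [hZ, hX]
    have hc : (t^2+3*t+1)^2 - f t = 1 := by rw [hf]; ring
    nlinarith [h, hc]
end

section
/- The Diophantine equation x(x+1)·y(y+1) = z(z+1)(z+2)(z+3) has infinitely many solutions in positive integers (x, y, z) satisfying (z-x)(z-x+2) ≠ 0. -/
private def pell14 : ℕ → ℤ × ℤ
  | 0 => (3, 2)
  | n + 1 =>
    let p := pell14 n
    (3 * p.1 + 4 * p.2 + 3, 2 * p.1 + 3 * p.2 + 2)

private lemma pell14_inv (n : ℕ) :
    (pell14 n).1 * ((pell14 n).1 + 1) = 2 * ((pell14 n).2 * ((pell14 n).2 + 1)) ∧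
      2 ≤ (pell14 n).2 ∧ 3 ≤ (pell14 n).1 := by
  induction n with
  | zero => norm_num [pell14]
  | succ n ih =>
    obtain ⟨h, ht, hs⟩ := ih
    have e : pell14 (n+1) = (3 * (pell14 n).1 + 4 * (pell14 n).2 + 3,
        2 * (pell14 n).1 + 3 * (pell14 n).2 + 2) := rfl
    rw [e]
    refine ⟨by ring_nf; ring_nf at h; linarith, by dsimp; linarith, by dsimp; linarith⟩

private lemma pell14_mono : StrictMono (fun n => (pell14 n).1) := by
  apply strictMono_nat_of_lt_succ
  intro n
  obtain ⟨_, ht, hs⟩ := pell14_inv n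
  have e : pell14 (n+1) = (3 * (pell14 n).1 + 4 * (pell14 n).2 + 3,
      2 * (pell14 n).1 + 3 * (pell14 n).2 + 2) := rfl
  rw [e]
  dsimp
  linarith

theorem stmt_14 :
    {p : ℤ × ℤ × ℤ | 0 < p.1 ∧ 0 < p.2.1 ∧ 0 < p.2.2 ∧
      p.1*(p.1+1)*(p.2.1*(p.2.1+1)) = p.2.2*(p.2.2+1)*(p.2.2+2)*(p.2.2+3) ∧
      (p.2.2 - p.1)*(p.2.2 - p.1 + 2) ≠ 0}.Infinite := by
  apply Set.infinite_of_injective_forall_mem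
    (f := fun n : ℕ =>
      ((pell14 n).1, 3 * (pell14 n).1 + 4 * (pell14 n).2 + 3,
        (pell14 n).1 + 2 * (pell14 n).2))
  case hi =>
    intro m n hmn
    exact pell14_mono.injective congr(Prod.fst $hmn)
  case hf =>
    intro n
    obtain ⟨h, ht, hs⟩ := pell14_inv n
    set s := (pell14 n).1 with hs'
    set t := (pell14 n).2 with ht'
    refine ⟨by dsimp; linarith, by dsimp; linarith, by dsimp; linarith, ?_, ?_⟩
    · dsimp only
      linear_combination (8*s^2 + 16*s*t + 16*s + 8*t^2 + 16*t + 6) * h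
    · dsimp only
      have h1 : s + 2*t - s = 2*t := by ring
      intro hcontra
      rcases mul_eq_zero.mp hcontra with h2 | h2 <;> linarith [show (0:ℤ) < 2*t by linarith]
end

section
/- Let U_n, V_n be defined by U_0 = V_0 = 1, U_{n+1} = 2U_n + 3V_n, V_{n+1} = U_n + 2V_n. Then for each n ≥ 0 the triple x = (V_n - 1)/2, y = (4U_n + 7V_n - 1)/2, z = (U_n + 2V_n - 3)/2 consists of nonnegative integers satisfying x(x+1)·y(y+1) = z(z+1)(z+2)(z+3). -/
theorem stmt_15 (U V : ℕ → ℤ)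
    (hU0 : U 0 = 1) (hV0 : V 0 = 1)
    (hU : ∀ n, U (n+1) = 2 * U n + 3 * V n)
    (hV : ∀ n, V (n+1) = U n + 2 * V n) :
    ∀ n, ∃ x y z : ℤ,
      2*x = V n - 1 ∧ 2*y = 4*U n + 7*V n - 1 ∧ 2*z = U n + 2*V n - 3 ∧
      0 ≤ x ∧ 0 ≤ y ∧ 0 ≤ z ∧
      x*(x+1)*(y*(y+1)) = z*(z+1)*(z+2)*(z+3) := by
  have key : ∀ n, U n % 2 = 1 ∧ V n % 2 = 1 ∧ U n ^ 2 - 3 * V n ^ 2 = -2 ∧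
      1 ≤ U n ∧ 1 ≤ V n := by
    intro n
    induction n with
    | zero => refine ⟨?_, ?_, ?_, ?_, ?_⟩ <;> simp [hU0, hV0]
    | succ k ih =>
      obtain ⟨h1, h2, h3, h4, h5⟩ := ih
      refine ⟨?_, ?_, ?_, ?_, ?_⟩
      · rw [hU]; omega
      · rw [hV]; omega
      · rw [hU, hV]; ring_nf; ring_nf at h3; linarith
      · rw [hU]; linarith
      · rw [hV]; linarith
  intro n
  obtain ⟨h1, h2, h3, h4, h5⟩ := key n
  obtain ⟨x, hx⟩ : ∃ x, 2 * x = V n - 1 := ⟨(V n - 1) / 2, by omega⟩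
  obtain ⟨y, hy⟩ : ∃ y, 2 * y = 4 * U n + 7 * V n - 1 := ⟨(4 * U n + 7 * V n - 1) / 2, by omega⟩
  obtain ⟨z, hz⟩ : ∃ z, 2 * z = U n + 2 * V n - 3 := ⟨(U n + 2 * V n - 3) / 2, by omega⟩
  refine ⟨x, y, z, hx, hy, hz, by omega, by omega, by omega, ?_⟩
  have hV' : V n = 2 * x + 1 := by omega
  have hU' : U n = 2 * z - 4 * x + 1 := by omega
  have hy' : y = 4 * z - x + 5 := by omega
  have hR : z ^ 2 + x ^ 2 - 4 * x * z + z - 5 * x = 0 := by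
    rw [hU', hV'] at h3; ring_nf at h3 ⊢; linarith
  rw [hy']
  linear_combination (x ^ 2 - 4 * x * z - 5 * x - z ^ 2 - 5 * z - 6) * hR
end

section
/- For every n ≥ 1, the triple (x, y, z) = (F_{2n-1}, F_{2n+1}, F_{2n}^2) satisfies (x-1)x(x+1)·(y-1)y(y+1) = (z-1)z(z+1), where F_m denotes the m-th Fibonacci number. -/
lemma cassini (n : ℕ) : ((Nat.fib (n+1) : ℤ))^2 - Nat.fib (n+2) * Nat.fib n = (-1)^n := by
  induction n with
  | zero => simp
  | succ m ih =>
    have h : (Nat.fib (m+3) : ℤ) = Nat.fib (m+1) + Nat.fib (m+2) := by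
      have := Nat.fib_add_two (n := m+1); push_cast [this]; ring
    have h2 : (Nat.fib (m+2) : ℤ) = Nat.fib m + Nat.fib (m+1) := by
      have := Nat.fib_add_two (n := m); push_cast [this]; ring
    rw [show m+1+1 = m+2 from rfl, show m+1+2 = m+3 from rfl, h, h2, pow_succ]
    rw [h2] at ih
    linear_combination -ih

theorem stmt_18 (n : ℕ) (hn : 1 ≤ n) :
    let x : ℤ := Nat.fib (2*n-1)
    let y : ℤ := Nat.fib (2*n+1)
    let z : ℤ := (Nat.fib (2*n))^2
    (x-1)*x*(x+1)*((y-1)*y*(y+1)) = (z-1)*z*(z+1) := by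
  intro x y z
  obtain ⟨m, rfl⟩ := Nat.exists_eq_add_of_le hn
  set A : ℤ := (Nat.fib (2*m+1) : ℤ) with hA
  set B : ℤ := (Nat.fib (2*m+2) : ℤ) with hB
  have hx : x = A := by simp [x, hA, show 2*(1+m)-1 = 2*m+1 from by omega]
  have hy : y = A + B := by
    have h3 : (Nat.fib (2*m+3) : ℤ) = A + B := by
      have := Nat.fib_add_two (n := 2*m+1); push_cast [this]; ring
    simp only [y, show 2*(1+m)+1 = 2*m+3 from by omega, h3]
  have hz : z = B^2 := by simp [z, hB, show 2*(1+m) = 2*m+2 from by omega]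
  have hfib : (Nat.fib (2*m) : ℤ) = B - A := by
    have h : (Nat.fib (2*m+2) : ℤ) = Nat.fib (2*m) + Nat.fib (2*m+1) := by
      have := Nat.fib_add_two (n := 2*m); push_cast [this]; ring
    rw [hA, hB, h]; ring
  have hcas : A^2 - B * (B - A) = 1 := by
    have := cassini (2*m)
    rw [hfib, pow_mul] at this; simpa using this
  rw [hx, hy, hz]
  linear_combination (A^4 + 2*A^3*B + 2*A^2*B^2 + A*B^3 + B^4 - A^2 - A*B - B^2) * hcas
end

section
/- Let k ≥ 1 and let x be a positive integer with x > -k/2 + (1/2)√(3k^2 + 2k√(k^2+4) + 4). Then (x^2 + kx - 1)^3 < (x-1)x(x+1)(x+k-1)(x+k)(x+k+1), and, if k > 1, moreover (x-1)x(x+1)(x+k-1)(x+k)(x+k+1) < (x^2 + kx)^3. -/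
theorem stmt_19 (k x : ℤ) (hk : 1 ≤ k) (hx : 0 < x)
    (h : (x : ℝ) > -(k : ℝ)/2 + (1/2) * Real.sqrt (3*(k:ℝ)^2 + 2*k*Real.sqrt ((k:ℝ)^2+4) + 4)) :
    (x^2+k*x-1)^3 < (x-1)*x*(x+1)*((x+k-1)*(x+k)*(x+k+1)) ∧
    (1 < k → (x-1)*x*(x+1)*((x+k-1)*(x+k)*(x+k+1)) < (x^2+k*x)^3) := by
  have hkR : (1:ℝ) ≤ (k:ℝ) := by exact_mod_cast hk
  have ha0 : 0 ≤ Real.sqrt ((k:ℝ)^2+4) := Real.sqrt_nonneg _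
  have ha : Real.sqrt ((k:ℝ)^2+4) ^ 2 = (k:ℝ)^2+4 := Real.sq_sqrt (by positivity)
  have hb0 : 0 ≤ Real.sqrt (3*(k:ℝ)^2 + 2*k*Real.sqrt ((k:ℝ)^2+4) + 4) := Real.sqrt_nonneg _
  have hb : Real.sqrt (3*(k:ℝ)^2 + 2*k*Real.sqrt ((k:ℝ)^2+4) + 4) ^ 2
      = 3*(k:ℝ)^2 + 2*k*Real.sqrt ((k:ℝ)^2+4) + 4 := Real.sq_sqrt (by nlinarith)
  have h1 : (2*(x:ℝ)+k) > Real.sqrt (3*(k:ℝ)^2 + 2*k*Real.sqrt ((k:ℝ)^2+4) + 4) := by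
    linarith
  have h2 : (2*(x:ℝ)+k)^2 > 3*(k:ℝ)^2 + 2*k*Real.sqrt ((k:ℝ)^2+4) + 4 := by
    nlinarith
  have h3 : 2*((x:ℝ)^2+k*x) - k^2 - 2 > k * Real.sqrt ((k:ℝ)^2+4) := by nlinarith
  have hka : 0 ≤ (k:ℝ) * Real.sqrt ((k:ℝ)^2+4) := by positivity
  have h4 : (2*((x:ℝ)^2+k*x) - k^2 - 2)^2 > (k:ℝ)^2*((k:ℝ)^2+4) := by nlinarith
  have keyR : ((x:ℝ)^2+k*x)^2 - ((k:ℝ)^2+2)*((x:ℝ)^2+k*x) + 1 > 0 := by nlinarith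
  have key : (x^2+k*x)^2 - (k^2+2)*(x^2+k*x) + 1 > 0 := by exact_mod_cast keyR
  constructor
  · nlinarith [key]
  · intro _
    have hs : 0 < x^2+k*x := by nlinarith
    nlinarith [hs, sq_nonneg (x^2+k*x)]
end
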